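/- arXiv:1801.04312 — 2 statements merged into one kernel-verified Lean document; each statement's English description precedes it below -/
import Mathlib

section
/- Let A be a ring and let 𝒞 be any class of right A-modules. Then FiltGen 𝒞 := Filt(Gen 𝒞) is the smallest torsion class in Mod-A containing 𝒞: it is a torsion class, it contains 𝒞, and every torsion class of right A-modules containing 𝒞 contains FiltGen 𝒞. -/
/-!
The torsion class generated by `𝒞` is `⊥(𝒞⊥)`, the modules admitting no nonzero map to a module
that receives no nonzero map from `𝒞`. A left perpendicular class is always a torsion class, and
`⊥(𝒞⊥)` contains `𝒞`. If `M ∈ ⊥(𝒞⊥)` and `N ⊊ M`, some `C ∈ 𝒞` maps nontrivially to `M ⧸ N`,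
and the preimage of its image is a strictly larger submodule whose quotient by `N` lies in
`Gen 𝒞`; iterating transfinitely exhausts `M`, so `⊥(𝒞⊥) ⊆ FiltGen 𝒞`. Conversely a torsion
class containing `𝒞` contains `Gen 𝒞`, and by transfinite induction along a filtration (extensions
at successors, quotients of direct sums at limits) also `FiltGen 𝒞`.
-/

universe u

open DirectSum

section Defs

variable {A : Type u} [Ring A]

/-- A class of modules is closed under isomorphisms. -/
def IsoClosed (𝒞 : ModuleCat.{u} A → Prop) : Prop :=
  ∀ (M N : ModuleCat.{u} A), (M ≃ₗ[A] N) → 𝒞 M → 𝒞 N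

/-- A class of modules is closed under quotient modules (epimorphic images). -/
def ClosedUnderQuotients (𝒞 : ModuleCat.{u} A → Prop) : Prop :=
  ∀ (M N : ModuleCat.{u} A) (f : M →ₗ[A] N), Function.Surjective f → 𝒞 M → 𝒞 N

/-- A class of modules is closed under extensions. -/
def ClosedUnderExtensions (𝒞 : ModuleCat.{u} A → Prop) : Prop :=
  ∀ (X Y Z : ModuleCat.{u} A) (f : X →ₗ[A] Y) (g : Y →ₗ[A] Z),
    Function.Injective f → Function.Surjective g →
    LinearMap.range f = LinearMap.ker g → 𝒞 X → 𝒞 Z → 𝒞 Y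

/-- A class of modules is closed under arbitrary direct sums. -/
def ClosedUnderDirectSums (𝒞 : ModuleCat.{u} A → Prop) : Prop :=
  ∀ (ι : Type u) (M : ι → ModuleCat.{u} A), (∀ i, 𝒞 (M i)) →
    𝒞 (ModuleCat.of A (⨁ i, (M i : Type u)))

/-- A class of modules is closed under arbitrary direct products. -/
def ClosedUnderProducts (𝒞 : ModuleCat.{u} A → Prop) : Prop :=
  ∀ (ι : Type u) (M : ι → ModuleCat.{u} A), (∀ i, 𝒞 (M i)) →
    𝒞 (ModuleCat.of A (∀ i, (M i : Type u)))

/-- A class of modules is closed under kernels of homomorphisms between its members. -/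
def ClosedUnderKernels (𝒞 : ModuleCat.{u} A → Prop) : Prop :=
  ∀ (M N : ModuleCat.{u} A) (f : M →ₗ[A] N), 𝒞 M → 𝒞 N →
    𝒞 (ModuleCat.of A (LinearMap.ker f))

/-- A class of modules is closed under cokernels of homomorphisms between its members. -/
def ClosedUnderCokernels (𝒞 : ModuleCat.{u} A → Prop) : Prop :=
  ∀ (M N : ModuleCat.{u} A) (f : M →ₗ[A] N), 𝒞 M → 𝒞 N →
    𝒞 (ModuleCat.of A ((N : Type u) ⧸ LinearMap.range f))

/-- A torsion class in Mod-A: an isomorphism-closed class of modules closed under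
quotients, extensions and arbitrary direct sums. -/
def IsTorsionClass (𝒯 : ModuleCat.{u} A → Prop) : Prop :=
  IsoClosed 𝒯 ∧ ClosedUnderQuotients 𝒯 ∧ ClosedUnderExtensions 𝒯 ∧ ClosedUnderDirectSums 𝒯

/-- `Gen 𝒞`: modules admitting a surjection from a direct sum of modules in `𝒞`. -/
def Gen (𝒞 : ModuleCat.{u} A → Prop) : ModuleCat.{u} A → Prop :=
  fun N => ∃ (ι : Type u) (M : ι → ModuleCat.{u} A)
    (f : (⨁ i, (M i : Type u)) →ₗ[A] N),
    (∀ i, 𝒞 (M i)) ∧ Function.Surjective f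

/-- `GenM T`: modules admitting a surjection from a direct sum of copies of `T`. -/
def GenM (T : ModuleCat.{u} A) : ModuleCat.{u} A → Prop :=
  fun N => ∃ (ι : Type u) (f : (ι →₀ (T : Type u)) →ₗ[A] N), Function.Surjective f

/-- `Filt 𝒞`: modules admitting an ordinal-indexed filtration whose consecutive factors
are isomorphic to modules in `𝒞`. -/
def Filt (𝒞 : ModuleCat.{u} A → Prop) : ModuleCat.{u} A → Prop :=
  fun M => ∃ (μ : Ordinal.{u}) (F : Ordinal.{u} → Submodule A M),
    Monotone F ∧ F 0 = ⊥ ∧ F μ = ⊤ ∧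
    (∀ ν ≤ μ, Order.IsSuccLimit ν → F ν = ⨆ (l : Ordinal.{u}) (_ : l < ν), F l) ∧
    (∀ l < μ, ∃ C : ModuleCat.{u} A, 𝒞 C ∧
      Nonempty ((↥(F (l + 1)) ⧸ (F l).comap (F (l + 1)).subtype) ≃ₗ[A] (C : Type u)))

/-- `FiltGen 𝒞 = Filt (Gen 𝒞)`. -/
def FiltGen (𝒞 : ModuleCat.{u} A → Prop) : ModuleCat.{u} A → Prop := Filt (Gen 𝒞)

/-- `aSub 𝒯 = 𝔞(𝒯)`: modules `X` in `𝒯` such that every homomorphism from a module of `𝒯`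
to `X` has kernel in `𝒯`. -/
def aSub (𝒯 : ModuleCat.{u} A → Prop) : ModuleCat.{u} A → Prop :=
  fun X => 𝒯 X ∧ ∀ (Y : ModuleCat.{u} A) (g : Y →ₗ[A] X), 𝒯 Y →
    𝒯 (ModuleCat.of A (LinearMap.ker g))

/-- A projective presentation `P →σ→ Q →π→ T → 0` of the module `T`. -/
structure ProjPres (T : ModuleCat.{u} A) where
  P : ModuleCat.{u} A
  Q : ModuleCat.{u} A
  σ : P →ₗ[A] Q
  π : Q →ₗ[A] T
  projP : Module.Projective A P
  projQ : Module.Projective A Q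
  exact : LinearMap.range σ = LinearMap.ker π
  surj : Function.Surjective π

/-- `Dclass σ = 𝒟_σ`: modules `X` such that `Hom(σ, X)` is surjective. -/
def Dclass {P Q : ModuleCat.{u} A} (σ : P →ₗ[A] Q) : ModuleCat.{u} A → Prop :=
  fun X => Function.Surjective (fun φ : Q →ₗ[A] (X : Type u) => φ.comp σ)

/-- A module `T` is silting if it has a projective presentation `σ` with `𝒟_σ = Gen T`. -/
def IsSilting (T : ModuleCat.{u} A) : Prop :=
  ∃ pp : ProjPres T, Dclass pp.σ = GenM T

/-- `T` is partial silting with respect to the projective presentation `pp`. -/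
def IsPartialSiltingWrt {T : ModuleCat.{u} A} (pp : ProjPres T) : Prop :=
  IsTorsionClass (Dclass pp.σ) ∧ Dclass pp.σ T

/-- A presilting presentation: every direct sum of copies of `T` lies in `𝒟_σ`. -/
def IsPresilting {T : ModuleCat.{u} A} (pp : ProjPres T) : Prop :=
  ∀ ι : Type u, Dclass pp.σ (ModuleCat.of A (ι →₀ (T : Type u)))

/-- `X ∈ Add T`: `X` is a direct summand of a direct sum of copies of `T`. -/
def memAdd (T X : ModuleCat.{u} A) : Prop :=
  ∃ (ι : Type u) (i : X →ₗ[A] (ι →₀ (T : Type u))) (r : (ι →₀ (T : Type u)) →ₗ[A] X),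
    r.comp i = LinearMap.id

/-- `f : N → X` is a left `Add T`-approximation. -/
def IsLeftAddApprox (T : ModuleCat.{u} A) {N X : ModuleCat.{u} A} (f : N →ₗ[A] X) : Prop :=
  memAdd T X ∧ ∀ (Z : ModuleCat.{u} A), memAdd T Z → ∀ g : N →ₗ[A] Z,
    ∃ h : X →ₗ[A] Z, h.comp f = g

/-- A submodule `N` of `M` is superfluous if `K ⊔ N = ⊤` implies `K = ⊤`. -/
def IsSuperfluous {M : ModuleCat.{u} A} (N : Submodule A M) : Prop :=
  ∀ K : Submodule A M, K ⊔ N = ⊤ → K = ⊤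

/-- A minimal projective presentation: `π` is a projective cover, and the induced map
`P → Ker π` is a projective cover (equivalently, `Ker σ` is superfluous in `P`). -/
def IsMinimalPres {T : ModuleCat.{u} A} (pp : ProjPres T) : Prop :=
  IsSuperfluous (LinearMap.ker pp.π) ∧ IsSuperfluous (LinearMap.ker pp.σ)

/-- A torsion class in mod-A: a torsion class consisting of finitely generated
(equivalently, over a finite dimensional algebra, finite dimensional) modules. -/
def IsTorsionClassfd (𝒯 : ModuleCat.{u} A → Prop) : Prop :=
  (∀ M, 𝒯 M → Module.Finite A M) ∧ IsoClosed 𝒯 ∧ ClosedUnderQuotients 𝒯 ∧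
    ClosedUnderExtensions 𝒯

/-- A subcategory `𝒳` of mod-A is functorially finite if every finite dimensional module
admits a left and a right `𝒳`-approximation. -/
def FunctoriallyFinite (𝒳 : ModuleCat.{u} A → Prop) : Prop :=
  (∀ N : ModuleCat.{u} A, Module.Finite A N →
    ∃ (X : ModuleCat.{u} A) (f : N →ₗ[A] X), 𝒳 X ∧
      ∀ (X' : ModuleCat.{u} A), 𝒳 X' → ∀ g : N →ₗ[A] X', ∃ h : X →ₗ[A] X', h.comp f = g) ∧
  (∀ N : ModuleCat.{u} A, Module.Finite A N →
    ∃ (X : ModuleCat.{u} A) (f : X →ₗ[A] N), 𝒳 X ∧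
      ∀ (X' : ModuleCat.{u} A), 𝒳 X' → ∀ g : X' →ₗ[A] N, ∃ h : X' →ₗ[A] X, f.comp h = g)

/-- A bireflective subcategory of Mod-A: isomorphism-closed and closed under products,
coproducts, kernels and cokernels. -/
def Bireflective (𝒞 : ModuleCat.{u} A → Prop) : Prop :=
  IsoClosed 𝒞 ∧ ClosedUnderProducts 𝒞 ∧ ClosedUnderDirectSums 𝒞 ∧
    ClosedUnderKernels 𝒞 ∧ ClosedUnderCokernels 𝒞

end Defs

section

variable {A : Type u} [Ring A]

section

variable {𝒯 : ModuleCat.{u} A → Prop}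

lemma ClosedUnderQuotients.isoClosed (h𝒯 : ClosedUnderQuotients 𝒯) : IsoClosed 𝒯 :=
  fun M N e => h𝒯 M N e e.surjective

lemma ClosedUnderQuotients.gen_le (hquot : ClosedUnderQuotients 𝒯)
    (hsum : ClosedUnderDirectSums 𝒯) {𝒞 : ModuleCat.{u} A → Prop} (h : 𝒞 ≤ 𝒯) :
    Gen 𝒞 ≤ 𝒯 := by
  rintro N ⟨ι, M, f, hM, hf⟩
  exact hquot _ N f hf (hsum ι M fun i => h _ (hM i))

lemma ClosedUnderQuotients.iSup_mem (hquot : ClosedUnderQuotients 𝒯)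
    (hsum : ClosedUnderDirectSums 𝒯) {M : ModuleCat.{u} A} {ι : Type u}
    {N : ι → Submodule A M} (hN : ∀ i, 𝒯 (ModuleCat.of A (N i))) :
    𝒯 (ModuleCat.of A ↥(⨆ i, N i)) := by
  classical
  rw [← DirectSum.range_coeLinearMap]
  exact hquot _ _ (DirectSum.coeLinearMap N).rangeRestrict
    (LinearMap.surjective_rangeRestrict _) (hsum ι (fun i => ModuleCat.of A (N i)) hN)

lemma ClosedUnderQuotients.sSup_mem (hquot : ClosedUnderQuotients 𝒯)
    (hsum : ClosedUnderDirectSums 𝒯) {M : ModuleCat.{u} A} {S : Set (Submodule A M)}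
    (hS : ∀ N ∈ S, 𝒯 (ModuleCat.of A N)) : 𝒯 (ModuleCat.of A ↥(sSup S)) := by
  rw [sSup_eq_iSup']
  exact hquot.iSup_mem hsum fun N => hS N N.2

lemma ClosedUnderExtensions.mem_of_le (hext : ClosedUnderExtensions 𝒯) {M : ModuleCat.{u} A}
    {N N' : Submodule A M} (hle : N ≤ N') (hN : 𝒯 (ModuleCat.of A N))
    (hq : 𝒯 (ModuleCat.of A (N' ⧸ N.comap N'.subtype))) : 𝒯 (ModuleCat.of A N') :=
  hext (ModuleCat.of A N) (ModuleCat.of A N') (ModuleCat.of A (N' ⧸ N.comap N'.subtype))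
    (Submodule.inclusion hle) (N.comap N'.subtype).mkQ (Submodule.inclusion_injective hle)
    (Submodule.mkQ_surjective _) (by rw [Submodule.ker_mkQ, Submodule.range_inclusion]) hN hq

lemma IsTorsionClass.filt_le (h𝒯 : IsTorsionClass 𝒯) {𝒮 : ModuleCat.{u} A → Prop}
    (h : 𝒮 ≤ 𝒯) : Filt 𝒮 ≤ 𝒯 := by
  obtain ⟨hiso, hquot, hext, hsum⟩ := h𝒯
  rintro M ⟨μ, F, hmono, hF0, hFμ, hlim, hfac⟩
  suffices hF : ∀ l ≤ μ, 𝒯 (ModuleCat.of A (F l)) from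
    hiso _ M ((LinearEquiv.ofEq _ _ hFμ).trans Submodule.topEquiv) (hF μ le_rfl)
  intro l
  induction l using Ordinal.limitRecOn with
  | zero =>
    intro _
    rw [hF0, ← sSup_empty]
    exact hquot.sSup_mem hsum (by simp)
  | add_one l ih =>
    intro hl
    have hlμ : l < μ := (Order.lt_succ l).trans_le hl
    obtain ⟨C, hC, ⟨e⟩⟩ := hfac l hlμ
    exact hext.mem_of_le (hmono (Order.le_succ l)) (ih hlμ.le) (hiso _ _ e.symm (h C hC))
  | limit l hl ih =>
    intro hlμ
    have hsup : ⨆ (k : Ordinal.{u}) (_ : k < l), F k = sSup (F '' Set.Iio l) := by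
      rw [sSup_image]; rfl
    rw [hlim l hlμ hl, hsup]
    exact hquot.sSup_mem hsum (by
      rintro _ ⟨k, hk, rfl⟩
      exact ih k hk (hk.le.trans hlμ))

end

def RightPerp (𝒞 : ModuleCat.{u} A → Prop) : ModuleCat.{u} A → Prop :=
  fun Q => ∀ C, 𝒞 C → ∀ f : (C : Type u) →ₗ[A] (Q : Type u), f = 0

def LeftPerp (ℱ : ModuleCat.{u} A → Prop) : ModuleCat.{u} A → Prop :=
  fun M => ∀ Q, ℱ Q → ∀ f : (M : Type u) →ₗ[A] (Q : Type u), f = 0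

lemma LinearMap.exists_comp_eq_of_ker_le {M N Q : Type u} [AddCommGroup M] [Module A M]
    [AddCommGroup N] [Module A N] [AddCommGroup Q] [Module A Q] {g : M →ₗ[A] N}
    (hg : Function.Surjective g) {f : M →ₗ[A] Q} (hle : LinearMap.ker g ≤ LinearMap.ker f) :
    ∃ h : N →ₗ[A] Q, h ∘ₗ g = f :=
  ⟨(LinearMap.ker g).liftQ f hle ∘ₗ (g.quotKerEquivOfSurjective hg).symm.toLinearMap,
    LinearMap.ext fun y => by simp [LinearMap.quotKerEquivOfSurjective_symm_apply]⟩

lemma closedUnderQuotients_leftPerp (ℱ : ModuleCat.{u} A → Prop) :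
    ClosedUnderQuotients (LeftPerp ℱ) := by
  intro M N p hp hM Q hQ f
  exact (LinearMap.cancel_right hp).1 (by rw [LinearMap.zero_comp]; exact hM Q hQ _)

lemma closedUnderExtensions_leftPerp (ℱ : ModuleCat.{u} A → Prop) :
    ClosedUnderExtensions (LeftPerp ℱ) := by
  intro X Y Z f g _ hg hfg hX hZ Q hQ k
  have hle : LinearMap.ker g ≤ LinearMap.ker k := by
    rw [← hfg, LinearMap.range_le_ker_iff]
    exact hX Q hQ _
  obtain ⟨h, rfl⟩ := LinearMap.exists_comp_eq_of_ker_le hg hle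
  rw [hZ Q hQ h, LinearMap.zero_comp]

lemma closedUnderDirectSums_leftPerp (ℱ : ModuleCat.{u} A → Prop) :
    ClosedUnderDirectSums (LeftPerp ℱ) := by
  classical
  intro ι M hM Q hQ f
  exact DirectSum.linearMap_ext A fun i => by rw [LinearMap.zero_comp]; exact hM i Q hQ _

lemma isTorsionClass_leftPerp (ℱ : ModuleCat.{u} A → Prop) : IsTorsionClass (LeftPerp ℱ) :=
  ⟨(closedUnderQuotients_leftPerp ℱ).isoClosed, closedUnderQuotients_leftPerp ℱ,
    closedUnderExtensions_leftPerp ℱ, closedUnderDirectSums_leftPerp ℱ⟩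

lemma le_leftPerp_rightPerp (𝒞 : ModuleCat.{u} A → Prop) : 𝒞 ≤ LeftPerp (RightPerp 𝒞) :=
  fun M hM _ hQ f => hQ M hM f

noncomputable def Submodule.comapMkQQuotientEquiv {M : Type u} [AddCommGroup M] [Module A M]
    (N : Submodule A M) (P : Submodule A (M ⧸ N)) :
    (↥(P.comap N.mkQ) ⧸ N.comap (P.comap N.mkQ).subtype) ≃ₗ[A] P :=
  let φ := N.mkQ ∘ₗ (P.comap N.mkQ).subtype
  have hker : N.comap (P.comap N.mkQ).subtype = LinearMap.ker φ := by
    rw [LinearMap.ker_comp, Submodule.ker_mkQ]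
  have hrange : LinearMap.range φ = P := by
    rw [LinearMap.range_comp, Submodule.range_subtype,
      Submodule.map_comap_eq_of_surjective N.mkQ_surjective]
  (Submodule.quotEquivOfEq _ _ hker).trans (φ.quotKerEquivRange.trans (LinearEquiv.ofEq _ _ hrange))

lemma gen_of_surjective {𝒞 : ModuleCat.{u} A → Prop} {C X : ModuleCat.{u} A} (hC : 𝒞 C)
    (g : (C : Type u) →ₗ[A] (X : Type u)) (hg : Function.Surjective g) : Gen 𝒞 X := by
  refine ⟨PUnit, fun _ => C, g ∘ₗ DirectSum.toModule A PUnit _ fun _ => LinearMap.id,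
    fun _ => hC, fun x => ?_⟩
  obtain ⟨c, rfl⟩ := hg x
  exact ⟨DirectSum.lof A PUnit _ PUnit.unit c, by simp⟩

lemma filt_of_forall_ne_top_exists_gt {𝒮 : ModuleCat.{u} A → Prop} {M : ModuleCat.{u} A}
    (h : ∀ N : Submodule A M, N ≠ ⊤ →
      ∃ N', N < N' ∧ 𝒮 (ModuleCat.of A (N' ⧸ N.comap N'.subtype))) :
    Filt 𝒮 M := by
  choose! step hlt hstep using h
  -- `N ↦ N ⊔ step N` is inflationary and fixes `⊤`, as transfinite iteration requires
  let φ : Submodule A M → Submodule A M := fun N => N ⊔ step N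
  have hφ : ∀ N, N ≠ ⊤ → φ N = step N := fun N hN => sup_eq_right.2 (hlt N hN).le
  let F : Ordinal.{u} → Submodule A M := fun j => transfiniteIterate φ j ⊥
  have hF_add_one : ∀ j, F (j + 1) = φ (F j) := fun j =>
    transfiniteIterate_succ φ ⊥ j (not_isMax j)
  obtain ⟨j, hj⟩ : ∃ j, F j = ⊤ :=
    top_mem_range_transfiniteIterate φ ⊥ (fun N hN => (hφ N hN).symm ▸ hlt N hN) (top_sup_eq _)
      fun hinj => not_small_ordinal.{u} (small_of_injective hinj)
  obtain ⟨μ, hμ, hmin⟩ := wellFounded_lt.has_min {j | F j = ⊤} ⟨j, hj⟩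
  refine ⟨μ, F, monotone_transfiniteIterate φ ⊥ fun N => le_sup_left,
    transfiniteIterate_bot φ ⊥, hμ, fun ν _ hν => ?_, fun l hl => ?_⟩
  · rw [show F ν = _ from transfiniteIterate_limit φ ⊥ ν hν, iSup_subtype]
    rfl
  · have hne : F l ≠ ⊤ := fun h => hmin l h hl
    refine ⟨ModuleCat.of A _, ?_, ⟨LinearEquiv.refl A _⟩⟩
    rw [hF_add_one, hφ _ hne]
    exact hstep _ hne

lemma leftPerp_rightPerp_le_filtGen (𝒞 : ModuleCat.{u} A → Prop) :
    LeftPerp (RightPerp 𝒞) ≤ FiltGen 𝒞 := by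
  intro M hM
  refine filt_of_forall_ne_top_exists_gt fun N hN => ?_
  obtain ⟨C, hC, f, hf⟩ : ∃ C, 𝒞 C ∧ ∃ f : (C : Type u) →ₗ[A] (M ⧸ N), f ≠ 0 := by
    by_contra! h
    rw [← Submodule.ker_mkQ N, hM (ModuleCat.of A (M ⧸ N)) h N.mkQ, LinearMap.ker_zero] at hN
    exact hN rfl
  refine ⟨(LinearMap.range f).comap N.mkQ, ?_, ?_⟩
  · calc N = (⊥ : Submodule A (M ⧸ N)).comap N.mkQ := (Submodule.ker_mkQ N).symm
      _ < _ := (Submodule.comap_lt_comap_iff_of_surjective N.mkQ_surjective).2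
        (bot_lt_iff_ne_bot.2 (LinearMap.range_eq_bot.not.2 hf))
  · exact gen_of_surjective hC
      ((N.comapMkQQuotientEquiv (LinearMap.range f)).symm.toLinearMap ∘ₗ f.rangeRestrict)
      (by
        rw [LinearMap.coe_comp]
        exact (LinearEquiv.surjective _).comp f.surjective_rangeRestrict)

end

/-- `FiltGen 𝒞` is the smallest torsion class in Mod-A containing `𝒞`. -/
theorem stmt1 {A : Type u} [Ring A] (𝒞 : ModuleCat.{u} A → Prop) :
    IsTorsionClass (FiltGen 𝒞) ∧ (∀ M, 𝒞 M → FiltGen 𝒞 M) ∧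
      ∀ 𝒯 : ModuleCat.{u} A → Prop, IsTorsionClass 𝒯 → (∀ M, 𝒞 M → 𝒯 M) →
        ∀ M, FiltGen 𝒞 M → 𝒯 M := by
  have hmin : ∀ 𝒯, IsTorsionClass 𝒯 → 𝒞 ≤ 𝒯 → FiltGen 𝒞 ≤ 𝒯 := fun 𝒯 h𝒯 h =>
    h𝒯.filt_le (h𝒯.2.1.gen_le h𝒯.2.2.2 h)
  have heq : FiltGen 𝒞 = LeftPerp (RightPerp 𝒞) :=
    le_antisymm (hmin _ (isTorsionClass_leftPerp _) (le_leftPerp_rightPerp 𝒞))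
      (leftPerp_rightPerp_le_filtGen 𝒞)
  exact ⟨heq ▸ isTorsionClass_leftPerp _, heq ▸ le_leftPerp_rightPerp 𝒞, hmin⟩
end

section
/- Let A be a ring, let T₀ be a right A-module admitting a presilting presentation, and let A →f→ T₀ → T₁ → 0 be an exact sequence of right A-modules in which f is a left Add T₀-approximation of A. Then T = T₀ ⊕ T₁ is a silting A-module with Gen T = Gen T₀, and T₁ is partial silting with respect to some projective presentation σ₁ of T₁ satisfying 𝒟_{σ₁} = Gen T. -/
universe u

open DirectSum

/-!
Lift `f` to `f' : A → Q₀` through the presentation `σ₀ : P₀ → Q₀` of `T₀`; then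
`σ₁ = (σ₀, f') : P₀ ⊕ A → Q₀` presents `T₁`. A module `X` in `𝒟_{σ₁}` is generated by `T₀`:
extending `(0, a ↦ a • x)` along `σ₁` gives a map `Q₀ → X` vanishing on the image of `σ₀`, that is,
a map `T₀ → X` sending `f 1` to `x`. Conversely, a map `(ψ, α) : P₀ ⊕ A → T₀^(I)` extends along
`σ₁`: the presilting condition extends `ψ` to `ζ : Q₀ → T₀^(I)`, the approximation property
factors `α - ζ f'` as `δ f`, and `ζ + δ π₀` is the extension; projectivity of `P₀ ⊕ A` passes
this on to quotients of `T₀^(I)`. Hence `𝒟_{σ₁} = Gen T₀ = Gen T`, a torsion class because every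
`𝒟_σ` is closed under extensions and every `Gen` under quotients and sums. Finally
`𝒟_{σ₀ ⊕ σ₁} = 𝒟_{σ₀} ∩ 𝒟_{σ₁} = Gen T`, as `Gen T₀ ⊆ 𝒟_{σ₀}`.
-/

section Development

variable {A : Type u} [Ring A]

section GenM

theorem genM_of_surjective {T N : ModuleCat.{u} A} (p : T →ₗ[A] N)
    (hp : Function.Surjective p) : GenM T N :=
  ⟨PUnit, Finsupp.lsum ℕ fun _ => p, fun n =>
    let ⟨t, ht⟩ := hp n
    ⟨Finsupp.single PUnit.unit t, by simp [ht]⟩⟩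

theorem GenM.of_surjective {T M N : ModuleCat.{u} A} (hM : GenM T M) (p : M →ₗ[A] N)
    (hp : Function.Surjective p) : GenM T N :=
  let ⟨ι, q, hq⟩ := hM
  ⟨ι, p ∘ₗ q, hp.comp hq⟩

theorem GenM.trans {T N X : ModuleCat.{u} A} (hN : GenM T N) (hX : GenM N X) : GenM T X := by
  obtain ⟨ι, p, hp⟩ := hN
  obtain ⟨κ, q, hq⟩ := hX
  refine ⟨κ × ι, q ∘ₗ Finsupp.mapRange.linearMap p ∘ₗ (Finsupp.curryLinearEquiv A).toLinearMap,
    hq.comp ((Finsupp.mapRange_surjective p (map_zero p) hp).comp (LinearEquiv.surjective _))⟩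

theorem GenM.prod {T M N : ModuleCat.{u} A} (hM : GenM T M) (hN : GenM T N) :
    GenM T (ModuleCat.of A (M × N)) := by
  obtain ⟨ι, p, hp⟩ := hM
  obtain ⟨κ, q, hq⟩ := hN
  exact ⟨ι ⊕ κ, p.prodMap q ∘ₗ (Finsupp.sumFinsuppLEquivProdFinsupp A).toLinearMap,
    (Prod.map_surjective.2 ⟨hp, hq⟩).comp (LinearEquiv.surjective _)⟩

theorem closedUnderDirectSums_genM (T : ModuleCat.{u} A) : ClosedUnderDirectSums (GenM T) := by
  intro ι M hM
  choose κ p hp using hM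
  exact ⟨Σ i, κ i, DFinsupp.mapRange.linearMap p ∘ₗ (sigmaFinsuppLequivDFinsupp A).toLinearMap,
    ((DFinsupp.mapRange_surjective _ fun i => map_zero (p i)).2 hp).comp
      (LinearEquiv.surjective _)⟩

theorem genM_eq_of_genM {T T' : ModuleCat.{u} A} (h : GenM T T') (h' : GenM T' T) :
    GenM T = GenM T' :=
  funext fun _ => propext ⟨GenM.trans h', GenM.trans h⟩

theorem genM_prod_eq_of_surjective {T₀ T₁ : ModuleCat.{u} A} {g : T₀ →ₗ[A] T₁}
    (hg : Function.Surjective g) : GenM (ModuleCat.of A (T₀ × T₁)) = GenM T₀ :=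
  genM_eq_of_genM (genM_of_surjective (LinearMap.fst A T₀ T₁) Prod.fst_surjective)
    (GenM.prod (genM_of_surjective LinearMap.id Function.surjective_id)
      (genM_of_surjective g hg))

end GenM

section Factorization

variable {M N X : Type u} [AddCommGroup M] [Module A M] [AddCommGroup N] [Module A N]
  [AddCommGroup X] [Module A X]

theorem exists_comp_eq_of_surjective_of_ker_le {π : M →ₗ[A] N} (hπ : Function.Surjective π)
    {η : M →ₗ[A] X} (h : LinearMap.ker π ≤ LinearMap.ker η) : ∃ η' : N →ₗ[A] X, η' ∘ₗ π = η :=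
  ⟨(LinearMap.ker π).liftQ η h ∘ₗ (π.quotKerEquivOfSurjective hπ).symm.toLinearMap, by
    ext x
    simp⟩

theorem exists_comp_eq_of_injective_of_range_le {i : M →ₗ[A] N} (hi : Function.Injective i)
    {g : X →ₗ[A] N} (h : LinearMap.range g ≤ LinearMap.range i) : ∃ ξ : X →ₗ[A] M, i ∘ₗ ξ = g :=
  ⟨(LinearEquiv.ofInjective i hi).symm.toLinearMap ∘ₗ
      g.codRestrict _ fun x => h (LinearMap.mem_range_self g x), by
    ext x
    simp [LinearEquiv.ofInjective_symm_apply]⟩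

end Factorization

section Dclass

variable {P Q : ModuleCat.{u} A} {σ : P →ₗ[A] Q}

theorem Dclass.of_surjective [Module.Projective A P] {X Y : ModuleCat.{u} A} (hX : Dclass σ X)
    (p : X →ₗ[A] Y) (hp : Function.Surjective p) : Dclass σ Y := by
  intro φ
  obtain ⟨φ', rfl⟩ := Module.projective_lifting_property p φ hp
  obtain ⟨η, hη⟩ := hX φ'
  exact ⟨p ∘ₗ η, by simp only [LinearMap.comp_assoc, ← hη]⟩

theorem Dclass.of_extension [Module.Projective A Q] {X Y Z : ModuleCat.{u} A}
    {i : X →ₗ[A] Y} {q : Y →ₗ[A] Z} (hi : Function.Injective i) (hq : Function.Surjective q)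
    (hiq : LinearMap.range i = LinearMap.ker q) (hX : Dclass σ X) (hZ : Dclass σ Z) :
    Dclass σ Y := by
  intro φ
  obtain ⟨η, hη⟩ := hZ (q ∘ₗ φ)
  obtain ⟨η', rfl⟩ := Module.projective_lifting_property q η hq
  have hrange : LinearMap.range (φ - η' ∘ₗ σ) ≤ LinearMap.range i := by
    rintro _ ⟨x, rfl⟩
    rw [hiq, LinearMap.mem_ker, LinearMap.sub_apply, map_sub, sub_eq_zero]
    exact (LinearMap.congr_fun hη x).symm
  obtain ⟨ξ, hξ⟩ := exists_comp_eq_of_injective_of_range_le hi hrange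
  obtain ⟨ζ, hζ⟩ := hX ξ
  refine ⟨η' + i ∘ₗ ζ, ?_⟩
  change (η' + i ∘ₗ ζ) ∘ₗ σ = φ
  rw [LinearMap.add_comp, LinearMap.comp_assoc, show ζ ∘ₗ σ = ξ from hζ, hξ, add_sub_cancel]

theorem isTorsionClass_dclass_of_eq_genM [Module.Projective A Q] {T : ModuleCat.{u} A}
    (h : Dclass σ = GenM T) : IsTorsionClass (Dclass σ) := by
  refine ⟨fun M N e hM => ?_, fun M N p hp hM => ?_, fun X Y Z i q hi hq hiq =>
    Dclass.of_extension hi hq hiq, ?_⟩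
  · rw [h] at hM ⊢
    exact GenM.of_surjective hM e.toLinearMap e.surjective
  · rw [h] at hM ⊢
    exact GenM.of_surjective hM p hp
  · rw [h]
    exact closedUnderDirectSums_genM T

theorem dclass_prodMap_iff {P' Q' : ModuleCat.{u} A} {σ' : P' →ₗ[A] Q'} {X : ModuleCat.{u} A} :
    Dclass (P := .of A (P × P')) (Q := .of A (Q × Q')) (σ.prodMap σ') X ↔
      Dclass σ X ∧ Dclass σ' X := by
  constructor
  · intro hX
    refine ⟨fun φ => ?_, fun φ => ?_⟩
    · obtain ⟨η, hη⟩ := hX (φ ∘ₗ LinearMap.fst A P P')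
      exact ⟨η ∘ₗ LinearMap.inl A Q Q', by ext x; simpa using LinearMap.congr_fun hη (x, 0)⟩
    · obtain ⟨η, hη⟩ := hX (φ ∘ₗ LinearMap.snd A P P')
      exact ⟨η ∘ₗ LinearMap.inr A Q Q', by ext x; simpa using LinearMap.congr_fun hη (0, x)⟩
  · rintro ⟨hX, hX'⟩ φ
    obtain ⟨η, hη⟩ := hX (φ ∘ₗ LinearMap.inl A P P')
    obtain ⟨η', hη'⟩ := hX' (φ ∘ₗ LinearMap.inr A P P')
    refine ⟨η.coprod η', LinearMap.prod_ext ?_ ?_⟩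
    · ext x; simpa using LinearMap.congr_fun hη x
    · ext x; simpa using LinearMap.congr_fun hη' x

end Dclass

section ProjPres

variable {M N : ModuleCat.{u} A}

theorem ProjPres.π_comp_σ (pp : ProjPres M) : pp.π ∘ₗ pp.σ = 0 :=
  LinearMap.range_le_ker_iff.1 pp.exact.le

theorem dclass_of_genM_of_isPresilting {pp : ProjPres M} (hpre : IsPresilting pp)
    {X : ModuleCat.{u} A} (hX : GenM M X) : Dclass pp.σ X := by
  obtain ⟨κ, p, hp⟩ := hX
  have := pp.projP
  exact Dclass.of_surjective (hpre κ) p hp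

def ProjPres.prod (pp : ProjPres M) (pp' : ProjPres N) : ProjPres (.of A (M × N)) where
  P := .of A (pp.P × pp'.P)
  Q := .of A (pp.Q × pp'.Q)
  σ := pp.σ.prodMap pp'.σ
  π := pp.π.prodMap pp'.π
  projP := haveI := pp.projP; haveI := pp'.projP; inferInstanceAs (Module.Projective A (_ × _))
  projQ := haveI := pp.projQ; haveI := pp'.projQ; inferInstanceAs (Module.Projective A (_ × _))
  exact := by rw [LinearMap.range_prodMap, LinearMap.ker_prodMap, pp.exact, pp'.exact]
  surj := Prod.map_surjective.2 ⟨pp.surj, pp'.surj⟩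

def ProjPres.cokernel (pp : ProjPres M) (F : ModuleCat.{u} A) [Module.Projective A F]
    (f' : F →ₗ[A] pp.Q) {g : M →ₗ[A] N} (hg : Function.Surjective g)
    (hfg : LinearMap.range (pp.π ∘ₗ f') = LinearMap.ker g) : ProjPres N where
  P := .of A (pp.P × F)
  Q := pp.Q
  σ := pp.σ.coprod f'
  π := g ∘ₗ pp.π
  projP := haveI := pp.projP; inferInstanceAs (Module.Projective A (_ × _))
  projQ := pp.projQ
  exact := by
    rw [LinearMap.range_coprod, LinearMap.ker_comp, ← hfg, LinearMap.range_comp,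
      Submodule.comap_map_eq, pp.exact, sup_comm]
  surj := hg.comp pp.surj

section Cokernel

variable (pp : ProjPres M) {F : ModuleCat.{u} A} [Module.Projective A F] (f' : F →ₗ[A] pp.Q)
  {g : M →ₗ[A] N} (hg : Function.Surjective g)
  (hfg : LinearMap.range (pp.π ∘ₗ f') = LinearMap.ker g)

theorem dclass_cokernel_of_memAdd (happrox : IsLeftAddApprox M (pp.π ∘ₗ f'))
    {Y : ModuleCat.{u} A} (hY : memAdd M Y) (hYσ : Dclass pp.σ Y) :
    Dclass (pp.cokernel F f' hg hfg).σ Y := by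
  intro φ
  obtain ⟨ζ, hζ⟩ := hYσ (φ ∘ₗ LinearMap.inl A pp.P F)
  obtain ⟨δ, hδ⟩ := happrox.2 Y hY (φ ∘ₗ LinearMap.inr A pp.P F - ζ ∘ₗ f')
  refine ⟨ζ + δ ∘ₗ pp.π, ?_⟩
  change _ ∘ₗ pp.σ.coprod f' = φ
  refine LinearMap.prod_ext ?_ ?_
  · rw [LinearMap.comp_assoc, LinearMap.coprod_inl, LinearMap.add_comp, LinearMap.comp_assoc,
      pp.π_comp_σ, LinearMap.comp_zero, add_zero]
    exact hζ
  · rw [LinearMap.comp_assoc, LinearMap.coprod_inr, LinearMap.add_comp, LinearMap.comp_assoc, hδ,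
      add_sub_cancel]
    rfl

theorem exists_comp_eq_of_dclass_cokernel {X : ModuleCat.{u} A}
    (hX : Dclass (pp.cokernel F f' hg hfg).σ X) (α : F →ₗ[A] X) :
    ∃ η : M →ₗ[A] X, η ∘ₗ pp.π ∘ₗ f' = α := by
  obtain ⟨η, hη⟩ : ∃ η : pp.Q →ₗ[A] X, η ∘ₗ pp.σ.coprod f' = LinearMap.coprod 0 α :=
    hX (LinearMap.coprod 0 α)
  have hησ : η ∘ₗ pp.σ = 0 := by
    ext x
    simpa using LinearMap.congr_fun hη (x, 0)
  have hker : LinearMap.ker pp.π ≤ LinearMap.ker η := by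
    rw [← pp.exact]
    exact LinearMap.range_le_ker_iff.2 hησ
  obtain ⟨η', rfl⟩ := exists_comp_eq_of_surjective_of_ker_le pp.surj hker
  exact ⟨η', by ext x; simpa using LinearMap.congr_fun hη (0, x)⟩

end Cokernel

section CyclicCokernel

variable (pp : ProjPres M) (f' : ModuleCat.of A A →ₗ[A] pp.Q) {g : M →ₗ[A] N}
  (hg : Function.Surjective g) (hfg : LinearMap.range (pp.π ∘ₗ f') = LinearMap.ker g)

theorem genM_of_dclass_cokernel {X : ModuleCat.{u} A}
    (hX : Dclass (pp.cokernel (.of A A) f' hg hfg).σ X) : GenM M X := by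
  refine ⟨M →ₗ[A] X, Finsupp.lsum ℕ id, fun x => ?_⟩
  obtain ⟨η, hη⟩ := exists_comp_eq_of_dclass_cokernel pp f' hg hfg hX
    (LinearMap.toSpanSingleton A X x)
  exact ⟨Finsupp.single η (pp.π (f' (1 : A))), by simpa using LinearMap.congr_fun hη (1 : A)⟩

theorem dclass_cokernel_eq_genM (hpre : IsPresilting pp)
    (happrox : IsLeftAddApprox M (pp.π ∘ₗ f')) :
    Dclass (pp.cokernel (.of A A) f' hg hfg).σ = GenM M := by
  funext X
  refine propext ⟨genM_of_dclass_cokernel pp f' hg hfg, fun ⟨κ, p, hp⟩ => ?_⟩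
  have := (pp.cokernel (.of A A) f' hg hfg).projP
  exact Dclass.of_surjective (dclass_cokernel_of_memAdd pp f' hg hfg happrox
    ⟨κ, LinearMap.id, LinearMap.id, rfl⟩ (hpre κ)) p hp

end CyclicCokernel

end ProjPres

end Development

/-- If `T₀` admits a presilting presentation and `A →f→ T₀ →g→ T₁ → 0` is
exact with `f` a left `Add T₀`-approximation, then `T = T₀ ⊕ T₁` is silting with
`Gen T = Gen T₀`, and `T₁` is partial silting w.r.t. a presentation `σ₁` with
`𝒟_{σ₁} = Gen T`. -/
theorem stmt5 {A : Type u} [Ring A] (T₀ T₁ : ModuleCat.{u} A)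
    (pp₀ : ProjPres T₀) (hpre : IsPresilting pp₀)
    (f : ModuleCat.of A A →ₗ[A] T₀) (g : T₀ →ₗ[A] T₁)
    (hg : Function.Surjective g) (hexact : LinearMap.range f = LinearMap.ker g)
    (happrox : IsLeftAddApprox T₀ f) :
    IsSilting (ModuleCat.of A (Prod (T₀ : Type u) (T₁ : Type u))) ∧
    GenM (ModuleCat.of A (Prod (T₀ : Type u) (T₁ : Type u))) = GenM T₀ ∧
    ∃ pp₁ : ProjPres T₁, IsPartialSiltingWrt pp₁ ∧
      Dclass pp₁.σ = GenM (ModuleCat.of A (Prod (T₀ : Type u) (T₁ : Type u))) := by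
  obtain ⟨f', rfl⟩ := Module.projective_lifting_property pp₀.π f pp₀.surj
  let pp₁ := pp₀.cokernel (.of A A) f' hg hexact
  have hD₁ : Dclass pp₁.σ = GenM T₀ := dclass_cokernel_eq_genM pp₀ f' hg hexact hpre happrox
  have hGen := genM_prod_eq_of_surjective hg
  have hD : Dclass (pp₀.prod pp₁).σ = GenM T₀ := by
    funext X
    refine propext (dclass_prodMap_iff.trans ?_)
    rw [hD₁]
    exact ⟨And.right, fun hX => ⟨dclass_of_genM_of_isPresilting hpre hX, hX⟩⟩
  have := pp₁.projQ
  refine ⟨⟨pp₀.prod pp₁, hD.trans hGen.symm⟩, hGen, pp₁,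
    ⟨isTorsionClass_dclass_of_eq_genM hD₁, hD₁ ▸ genM_of_surjective g hg⟩, hD₁.trans hGen.symm⟩
end
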